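/- Let F be a field with char F = 3 and let A be the Matsuo algebra of the affine plane of order 3 over F. Then the element z := Σ_{u∈P} p_u satisfies z·x = 0 for every x ∈ A. In particular, z is a nonzero annihilating element and A has no multiplicative identity. -/

import Mathlib

open Finset

/-- The Matsuo algebra `M_{1/2}(P3)` of the affine plane of order 3 over `F`: the free
`F`-module on the point set `P = (ℤ/3)²`, with the commutative bilinear multiplication
determined by `p_u p_u = p_u` and `p_u p_v = (1/4)(p_u + p_v − p_{−u−v})` for `u ≠ v`. -/
noncomputable def mMul (F : Type*) [Field F] (x y : ZMod 3 × ZMod 3 → F) :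
    ZMod 3 × ZMod 3 → F :=
  ∑ u : ZMod 3 × ZMod 3, ∑ v : ZMod 3 × ZMod 3,
    (x u * y v) •
      (if u = v then Pi.single u (1 : F)
       else (4⁻¹ : F) • (Pi.single u (1 : F) + Pi.single v (1 : F) -
         Pi.single (-u - v) (1 : F)) : ZMod 3 × ZMod 3 → F)

/-- The sum `Σ_{u ∈ s} p_u` in the Matsuo algebra. -/
noncomputable def pSum (F : Type*) [Field F] (s : Finset (ZMod 3 × ZMod 3)) :
    ZMod 3 × ZMod 3 → F :=
  ∑ u ∈ s, Pi.single u 1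

/-- The line of the affine plane of order 3 through `a` with direction `w`
(a coset of the 1-dimensional subspace spanned by `w`). -/
def lineThru (a w : ZMod 3 × ZMod 3) : Finset (ZMod 3 × ZMod 3) :=
  Finset.image (fun t : ZMod 3 => a + t • w) Finset.univ

/-!
In characteristic 3 we have `1/4 = 1`, and for `u = v` the generic product formula
`p_u + p_v - p_{-u-v}` already gives `p_v` because `-2v = v`. Hence
`z p_v = Σ_u (p_u + p_v - p_{-u-v}) = z + 9 p_v - z = 0`, since `u ↦ -u - v` permutes the points.
-/

abbrev Point := ZMod 3 × ZMod 3

lemma inv_four_eq_one (F : Type*) [DivisionRing F] [CharP F 3] : (4⁻¹ : F) = 1 := by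
  have h3 : (3 : F) = 0 := by exact_mod_cast CharP.cast_eq_zero F 3
  rw [show (4 : F) = 3 + 1 by norm_num, h3, zero_add, inv_one]

lemma neg_sub_self_eq (v : Point) : -v - v = v := by
  revert v
  decide

lemma sum_comp_neg_sub {G M : Type*} [AddCommGroup G] [Fintype G] [AddCommMonoid M]
    (f : G → M) (v : G) : ∑ u, f (-u - v) = ∑ u, f u :=
  Fintype.sum_bijective (fun u => -u - v)
    ⟨fun a b h => by simpa using h, fun b => ⟨-b - v, by simp⟩⟩ _ _ fun _ => rfl

lemma basis_mul_eq_of_charP_three (F : Type*) [Field F] [CharP F 3] (u v : Point) :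
    (if u = v then Pi.single u (1 : F)
     else (4⁻¹ : F) • (Pi.single u (1 : F) + Pi.single v (1 : F) -
       Pi.single (-u - v) (1 : F)) : Point → F) =
      Pi.single u 1 + Pi.single v 1 - Pi.single (-u - v) 1 := by
  split_ifs with huv
  · subst huv
    rw [neg_sub_self_eq, add_sub_cancel_right]
  · rw [inv_four_eq_one, one_smul]

lemma sum_basis_mul_eq_zero (F : Type*) [Field F] [CharP F 3] (v : Point) :
    ∑ u : Point,
      (if u = v then Pi.single u (1 : F)
       else (4⁻¹ : F) • (Pi.single u (1 : F) + Pi.single v (1 : F) -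
         Pi.single (-u - v) (1 : F)) : Point → F) = 0 := by
  have h9 : (9 : F) = 0 := by
    exact_mod_cast (CharP.cast_eq_zero_iff F 3 9).mpr (by norm_num)
  simp only [basis_mul_eq_of_charP_three, sum_sub_distrib, sum_add_distrib,
    sum_comp_neg_sub (fun u => (Pi.single u (1 : F) : Point → F)), sum_const, card_univ,
    add_sub_cancel_left]
  ext w
  by_cases hw : w = v
  · subst hw; simp [h9]
  · simp [hw]

lemma pSum_univ_apply (F : Type*) [Field F] (u : Point) : pSum F univ u = 1 := by
  simp [pSum, Finset.sum_apply, sum_pi_single]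

lemma mMul_pSum_univ (F : Type*) [Field F] [CharP F 3] (x : Point → F) :
    mMul F (pSum F univ) x = 0 := by
  unfold mMul
  rw [sum_comm]
  refine sum_eq_zero fun v _ => ?_
  simp only [pSum_univ_apply, one_mul]
  rw [← smul_sum, sum_basis_mul_eq_zero, smul_zero]

lemma pSum_univ_ne_zero (F : Type*) [Field F] : pSum F univ ≠ (0 : Point → F) := fun h =>
  one_ne_zero <| (pSum_univ_apply F (0, 0)).symm.trans (congrFun h (0, 0))

/-- For `char F = 3`, the element `z = Σ_{u∈P} p_u` of the Matsuo algebra of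
the affine plane of order 3 annihilates the whole algebra; in particular `z ≠ 0` and the
algebra has no multiplicative identity. -/
theorem stmt_13 (F : Type*) [Field F] [CharP F 3] :
    (∀ x : ZMod 3 × ZMod 3 → F, mMul F (pSum F Finset.univ) x = 0) ∧
    pSum F Finset.univ ≠ (0 : ZMod 3 × ZMod 3 → F) ∧
    ¬ ∃ e : ZMod 3 × ZMod 3 → F, ∀ x, mMul F e x = x ∧ mMul F x e = x := by
  refine ⟨mMul_pSum_univ F, pSum_univ_ne_zero F, ?_⟩
  rintro ⟨e, he⟩
  have hz := (he (pSum F univ)).2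
  rw [mMul_pSum_univ] at hz
  exact pSum_univ_ne_zero F hz.symm
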